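/- (Lemma 1) With the time-varying channel h_{l}(n) = Σ_{p=1}^{P} h_p·e^{j2πν_p n T_s}·δ(lT_s - τ_p) (a single antenna, single user version), the delay-Doppler received signal Σ_{n=1}^{N_D} (1/N_D)·e^{-j2π(n-1)(j-j')/N_D}·h_{(i-i')_{L_D}}((n-1)(L_D+L_cp)+i+1) equals h̃_{(i-i')_{L_D}, j-j'} + g̃^{i}_{(i-i')_{L_D}, j-j'}, where h̃_{i,j} = (1/N_D)Σ_p h_p·e^{j2πν_p T_s}·Υ_{N_D}(ν_p N_D T - j)·δ(iT_s - τ_p) and g̃^{ℓ}_{i,j} = (1/N_D)Σ_p 2j·e^{jπν_p ℓ T_s}·sin(πν_p ℓ T_s)·h_p·e^{j2πν_p T_s}·Υ_{N_D}(ν_p N_D T - j)·δ(iT_s - τ_p). -/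

import Mathlib

open Real Complex Finset

/-!
The sample taken at time `n (L_D + L_cp) + i + 1` carries the Doppler phase
`e^{j2πν_p T_s} · e^{j2πν_p n T} · e^{j2πν_p i T_s}`. Against the DFT kernel the factor linear in `n`
sums to `Υ_{N_D}(ν_p N_D T - (j - j'))`, and the offset phase splits as
`e^{j2πν_p i T_s} = 1 + 2j e^{jπν_p i T_s} sin(πν_p i T_s)`: the `1` yields `h̃`, the rest `g̃^i`.
-/

/-- Υ_N(x) = Σ_{n=1}^{N} exp(j·2π·(x/N)·(n-1)). -/
noncomputable def Upsilon (N : ℕ) (x : ℝ) : ℂ :=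
  ∑ n ∈ Finset.range N, Complex.exp (2 * Real.pi * (x / N) * n * Complex.I)

lemma Complex.one_add_two_I_mul_exp_mul_sin (z : ℂ) :
    1 + 2 * I * exp (z * I) * sin z = exp (2 * z * I) := by
  rw [Complex.sin, show 2 * z * I = z * I + z * I by ring, Complex.exp_add]
  have hinv : exp (z * I) * exp (-z * I) = 1 := by rw [← Complex.exp_add]; simp
  linear_combination (exp (z * I) * exp (-z * I) - exp (z * I) ^ 2) * I_mul_I - hinv

lemma sum_exp_mul_exp_eq_upsilon {N : ℕ} (hN : N ≠ 0) (ν Ts L t₀ k : ℝ) :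
    ∑ n ∈ range N, exp (-(2 * π * n * k / N) * I) * exp (2 * π * ν * (n * L + t₀) * Ts * I) =
      exp (2 * π * ν * t₀ * Ts * I) * Upsilon N (ν * N * (L * Ts) - k) := by
  rw [Upsilon, mul_sum]
  refine sum_congr rfl fun n _ => ?_
  rw [← Complex.exp_add, ← Complex.exp_add]
  congr 1
  push_cast
  field_simp
  ring

theorem lemma1_delay_doppler_general
    (P LD Lcp ND : ℕ) (hND : 0 < ND)
    (Ts : ℝ)
    (h : Fin P → ℂ) (ν : Fin P → ℝ)
    (τ : Fin P → ℝ)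
    -- T = (L_D + L_cp) T_s
    (T : ℝ) (hT : T = ((LD : ℝ) + Lcp) * Ts)
    -- time-varying channel h_l(n) = Σ_p h_p e^{j2πν_p n T_s} δ(l T_s - τ_p)
    (hch : ℤ → ℤ → ℂ)
    (hhch : ∀ l n : ℤ, hch l n =
      ∑ p, h p * Complex.exp (2 * Real.pi * ν p * n * Ts * Complex.I) *
        (if (l : ℝ) * Ts = τ p then 1 else 0))
    -- main delay-Doppler channel h̃_{i,j}
    (htil : ℤ → ℤ → ℂ)
    (hhtil : ∀ i j : ℤ, htil i j =
      (1 / (ND : ℂ)) * ∑ p, h p * Complex.exp (2 * Real.pi * ν p * Ts * Complex.I) *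
        Upsilon ND (ν p * ND * T - j) * (if (i : ℝ) * Ts = τ p then 1 else 0))
    -- secondary delay-Doppler channel g̃^ℓ_{i,j}
    (gtil : ℤ → ℤ → ℤ → ℂ)
    (hgtil : ∀ ℓ i j : ℤ, gtil ℓ i j =
      (1 / (ND : ℂ)) * ∑ p,
        2 * Complex.I * Complex.exp (Real.pi * ν p * ℓ * Ts * Complex.I) *
          (Real.sin (Real.pi * ν p * ℓ * Ts) : ℂ) *
        h p * Complex.exp (2 * Real.pi * ν p * Ts * Complex.I) *
        Upsilon ND (ν p * ND * T - j) * (if (i : ℝ) * Ts = τ p then 1 else 0))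
    (i i' j j' : ℤ) :
    ∑ n ∈ Finset.range ND,
        (1 / (ND : ℂ)) * Complex.exp (-(2 * Real.pi * n * ((j : ℝ) - j') / ND) * Complex.I) *
          hch ((i - i') % LD) (n * ((LD : ℤ) + Lcp) + i + 1) =
      htil ((i - i') % LD) (j - j') + gtil i ((i - i') % LD) (j - j') := by
  calc _ = ∑ p, h p * (if (((i - i') % LD : ℤ) : ℝ) * Ts = τ p then 1 else 0) / ND *
        (exp (2 * π * ν p * (i + 1 : ℝ) * Ts * I) *
          Upsilon ND (ν p * ND * T - (j - j' : ℤ))) := by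
        simp only [hhch, mul_sum]
        rw [sum_comm]
        refine sum_congr rfl fun p _ => ?_
        rw [hT, ← sum_exp_mul_exp_eq_upsilon hND.ne', mul_sum]
        refine sum_congr rfl fun n _ => ?_
        push_cast
        simp only [add_assoc]
        ring
    _ = _ := by
        rw [hhtil, hgtil, ← mul_add, ← sum_add_distrib, mul_sum]
        refine sum_congr rfl fun p _ => ?_
        rw [show (2 * π * ν p * (i + 1 : ℝ) * Ts * I : ℂ) =
            2 * (π * ν p * i * Ts : ℂ) * I + 2 * π * ν p * Ts * I by push_cast; ring,
          Complex.exp_add, ← Complex.one_add_two_I_mul_exp_mul_sin]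
        push_cast
        ring

theorem lemma1_delay_doppler
    (P LD Lcp ND : ℕ) (hP : 0 < P) (hLD : 0 < LD) (hLcp : 0 < Lcp) (hND : 0 < ND)
    (Ts : ℝ) (hTs : 0 < Ts)
    (h : Fin P → ℂ) (ν : Fin P → ℝ) (nτ : Fin P → ℤ)
    (τ : Fin P → ℝ) (hτ : ∀ p, τ p = (nτ p : ℝ) * Ts)
    -- T = (L_D + L_cp) T_s
    (T : ℝ) (hT : T = ((LD : ℝ) + Lcp) * Ts)
    -- time-varying channel h_l(n) = Σ_p h_p e^{j2πν_p n T_s} δ(l T_s - τ_p)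
    (hch : ℤ → ℤ → ℂ)
    (hhch : ∀ l n : ℤ, hch l n =
      ∑ p, h p * Complex.exp (2 * Real.pi * ν p * n * Ts * Complex.I) *
        (if (l : ℝ) * Ts = τ p then 1 else 0))
    -- main delay-Doppler channel h̃_{i,j}
    (htil : ℤ → ℤ → ℂ)
    (hhtil : ∀ i j : ℤ, htil i j =
      (1 / (ND : ℂ)) * ∑ p, h p * Complex.exp (2 * Real.pi * ν p * Ts * Complex.I) *
        Upsilon ND (ν p * ND * T - j) * (if (i : ℝ) * Ts = τ p then 1 else 0))
    -- secondary delay-Doppler channel g̃^ℓ_{i,j}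
    (gtil : ℤ → ℤ → ℤ → ℂ)
    (hgtil : ∀ ℓ i j : ℤ, gtil ℓ i j =
      (1 / (ND : ℂ)) * ∑ p,
        2 * Complex.I * Complex.exp (Real.pi * ν p * ℓ * Ts * Complex.I) *
          (Real.sin (Real.pi * ν p * ℓ * Ts) : ℂ) *
        h p * Complex.exp (2 * Real.pi * ν p * Ts * Complex.I) *
        Upsilon ND (ν p * ND * T - j) * (if (i : ℝ) * Ts = τ p then 1 else 0))
    (i i' j j' : ℤ) :
    ∑ n ∈ Finset.range ND,
        (1 / (ND : ℂ)) * Complex.exp (-(2 * Real.pi * n * ((j : ℝ) - j') / ND) * Complex.I) *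
          hch ((i - i') % LD) (n * ((LD : ℤ) + Lcp) + i + 1) =
      htil ((i - i') % LD) (j - j') + gtil i ((i - i') % LD) (j - j') :=
  lemma1_delay_doppler_general P LD Lcp ND hND Ts h ν τ T hT hch hhch htil hhtil gtil hgtil i i' j
    j'
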